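/- Σ_{k=0}^∞ k!/(2k+1)!! = π/2. -/

import Mathlib

/-!
By the Beta integral, `k! / (2k+1)!! = 2^k k!^2 / (2k+1)! = ∫₀¹ (2x(1-x))^k dx`. Since
`0 ≤ 2x(1-x) ≤ 1/2` on `[0,1]`, the geometric series may be summed under the integral, leaving
`∫₀¹ dx / (1 - 2x(1-x)) = ∫₀¹ 2 dx / (1 + (2x-1)^2) = arctan 1 - arctan (-1) = π/2`.
-/

open Real

/-- (2k+1)!! = (2k+1)!/(2^k k!) -/
noncomputable def oddDF (k : ℕ) : ℝ := (2 * k + 1).factorial / (2 ^ k * k.factorial)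

open Nat

theorem integral_pow_mul_one_sub_pow (m n : ℕ) :
    ∫ x in (0:ℝ)..1, x ^ m * (1 - x) ^ n = (m ! * n ! : ℝ) / (m + n + 1)! := by
  have h := Complex.betaIntegral_eq_Gamma_mul_div (m + 1) (n + 1)
    (by simp; positivity) (by simp; positivity)
  rw [Complex.betaIntegral, add_sub_cancel_right, add_sub_cancel_right,
    show (m + 1 : ℂ) + (n + 1) = (m + n + 1 : ℕ) + 1 by push_cast; ring,
    Complex.Gamma_nat_eq_factorial, Complex.Gamma_nat_eq_factorial,
    Complex.Gamma_nat_eq_factorial] at h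
  simp_rw [Complex.cpow_natCast] at h
  norm_cast at h
  rw [intervalIntegral.integral_ofReal] at h
  exact Complex.ofReal_injective (by rw [h]; push_cast; rfl)

theorem factorial_div_oddDF_eq_integral (k : ℕ) :
    (k ! : ℝ) / oddDF k = ∫ x in (0:ℝ)..1, (2 * x * (1 - x)) ^ k := by
  simp_rw [mul_assoc, mul_pow]
  rw [intervalIntegral.integral_const_mul, integral_pow_mul_one_sub_pow, oddDF,
    ← two_mul]
  field_simp

theorem hasSum_intervalIntegral_pow {f : ℝ → ℝ} {a b r : ℝ}
    (hf : ContinuousOn f (Set.uIcc a b)) (hr : r < 1) (hfr : ∀ x ∈ Set.uIcc a b, |f x| ≤ r) :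
    HasSum (fun k : ℕ => ∫ x in a..b, f x ^ k) (∫ x in a..b, (1 - f x)⁻¹) := by
  have hr0 : 0 ≤ r := (abs_nonneg _).trans (hfr a Set.left_mem_uIcc)
  refine intervalIntegral.hasSum_integral_of_dominated_convergence (fun k _ => r ^ k)
    (fun k => ((hf.pow k).mono Set.uIoc_subset_uIcc).aestronglyMeasurable measurableSet_uIoc)
    (fun k => .of_forall fun x hx => ?_)
    (.of_forall fun _ _ => summable_geometric_of_lt_one hr0 hr)
    intervalIntegrable_const (.of_forall fun x hx => hasSum_geometric_of_abs_lt_one ?_)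
  · rw [norm_pow, Real.norm_eq_abs]
    exact pow_le_pow_left₀ (abs_nonneg _) (hfr x (Set.uIoc_subset_uIcc hx)) k
  · exact (hfr x (Set.uIoc_subset_uIcc hx)).trans_lt hr

theorem integral_inv_one_sub_two_mul_mul_one_sub :
    ∫ x in (0:ℝ)..1, (1 - 2 * x * (1 - x))⁻¹ = π / 2 := by
  have hinv : ∀ x : ℝ, (1 - 2 * x * (1 - x))⁻¹ = 2 * (1 + (2 * x - 1) ^ 2)⁻¹ := fun x => by
    rw [← inv_inv 2, ← mul_inv]; ring_nf
  simp_rw [hinv]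
  rw [intervalIntegral.integral_const_mul, intervalIntegral.integral_comp_mul_sub
    (fun x => (1 + x ^ 2)⁻¹) two_ne_zero, integral_inv_one_add_sq]
  norm_num [arctan_one, arctan_neg]
  ring

theorem tsum_factorial_div_oddDF :
    ∑' k : ℕ, (k.factorial : ℝ) / oddDF k = Real.pi / 2 := by
  simp_rw [factorial_div_oddDF_eq_integral, ← integral_inv_one_sub_two_mul_mul_one_sub]
  refine (hasSum_intervalIntegral_pow (r := 1 / 2) (by fun_prop) (by norm_num) ?_).tsum_eq
  intro x hx
  rw [Set.uIcc_of_le zero_le_one] at hx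
  rw [abs_of_nonneg (by nlinarith [hx.1, hx.2])]
  nlinarith [sq_nonneg (2 * x - 1)]
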